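/- arXiv:1812.05434 — 2 statements merged into one kernel-verified Lean document; each statement's English description precedes it below -/
import Mathlib

section
/- For every real x in (0,1], the k-th Chebyshev polynomial of the first kind T_k satisfies |(1/k) T_k'(1-x)| ≤ 1/√x. -/
open Polynomial

theorem chebyshev_deriv_bound (k : ℕ) (hk : 0 < k) (x : ℝ) (hx : x ∈ Set.Ioc (0:ℝ) 1) :
    |(1 / (k : ℝ)) * (Polynomial.derivative (Polynomial.Chebyshev.T ℝ k)).eval (1 - x)| ≤
      1 / Real.sqrt x := by
  obtain ⟨hx0, hx1⟩ := hx
  set θ := Real.arccos (1 - x) with hθ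
  have h1 : -1 ≤ 1 - x := by linarith
  have h2 : 1 - x ≤ 1 := by linarith
  have hcos : Real.cos θ = 1 - x := Real.cos_arccos h1 h2
  have hsin : Real.sin θ = Real.sqrt (1 - (1 - x) ^ 2) := by rw [hθ, Real.sin_arccos]
  have hxle : x ≤ 1 - (1 - x) ^ 2 := by nlinarith
  have hsinge : Real.sqrt x ≤ Real.sin θ := by
    rw [hsin]; exact Real.sqrt_le_sqrt hxle
  have hsqx : 0 < Real.sqrt x := Real.sqrt_pos.mpr hx0
  have hsinpos : 0 < Real.sin θ := lt_of_lt_of_le hsqx hsinge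
  have hder : Polynomial.derivative (Polynomial.Chebyshev.T ℝ (k : ℤ)) =
      (k : ℤ) * Polynomial.Chebyshev.U ℝ ((k : ℤ) - 1) :=
    Polynomial.Chebyshev.T_derivative_eq_U (R := ℝ) k
  have hU : (Polynomial.Chebyshev.U ℝ ((k : ℤ) - 1)).eval (Real.cos θ) * Real.sin θ =
      Real.sin ((((k : ℤ) - 1 : ℤ) + 1) * θ) := Polynomial.Chebyshev.U_real_cos θ _
  have hUval : (Polynomial.Chebyshev.U ℝ ((k : ℤ) - 1)).eval (1 - x) =
      Real.sin ((k : ℝ) * θ) / Real.sin θ := by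
    have h := hU
    rw [hcos] at h
    rw [eq_div_iff hsinpos.ne', h]
    push_cast
    ring_nf
  have hkR : (k : ℝ) ≠ 0 := Nat.cast_ne_zero.mpr hk.ne'
  rw [hder]
  simp only [Polynomial.eval_mul, Polynomial.eval_intCast, Polynomial.eval_natCast, Int.cast_natCast, hUval]
  rw [show (1 / (k : ℝ)) * ((k : ℝ) * (Real.sin ((k : ℝ) * θ) / Real.sin θ)) =
      Real.sin ((k : ℝ) * θ) / Real.sin θ by field_simp]
  rw [abs_div, abs_of_pos hsinpos]
  apply div_le_div₀ (by positivity) (Real.abs_sin_le_one _) hsqx hsinge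
end

section
/- There exists a constant C > 0 such that for all n ≥ 1 and every polynomial P of two real variables with total degree at most n, ‖∂P/∂u‖_{L∞(S,w)} ≤ C n² ‖P‖_{L∞(S,w)} and ‖∂P/∂v‖_{L∞(S,w)} ≤ C n² ‖P‖_{L∞(S,w)}, where ‖f‖_{L∞(S,w)} = sup_{(u,v)∈S} |w(u,v) f(u,v)|. -/
section AuxWeightedMarkov
open Polynomial Finset Real

lemma cheb_pair (n : ℕ) : (Chebyshev.T ℝ (n:ℤ)).natDegree ≤ n ∧ (Chebyshev.U ℝ (n:ℤ)).eval 1 = n+1 := by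
  induction n using Nat.strong_induction_on with
  | _ n ih =>
    match n with
    | 0 => simp [Chebyshev.T_zero, Chebyshev.U_zero]
    | 1 => simp [Chebyshev.T_one, Chebyshev.U_one]; norm_num
    | (k+2) =>
      obtain ⟨h1, h2⟩ := ih k (by omega)
      obtain ⟨h3, h4⟩ := ih (k+1) (by omega)
      rw [show ((k+1:ℕ):ℤ) = (k:ℤ)+1 by push_cast; ring] at h3 h4
      constructor
      · rw [show ((k+2:ℕ):ℤ) = (k:ℤ)+2 by push_cast; ring, Chebyshev.T_add_two]
        refine le_trans (natDegree_sub_le _ _) ?_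
        have hX : (2 * X * Chebyshev.T ℝ ((k:ℤ)+1)).natDegree ≤ k+2 := by
          refine le_trans (natDegree_mul_le) ?_
          have : (2 * X : ℝ[X]).natDegree ≤ 1 := le_trans natDegree_mul_le (by simp)
          omega
        simp only [max_le_iff]
        exact ⟨hX, le_trans h1 (by omega)⟩
      · rw [show ((k+2:ℕ):ℤ) = (k:ℤ)+2 by push_cast; ring, Chebyshev.U_add_two]
        simp only [eval_sub, eval_mul, eval_ofNat, eval_X, h2, h4]
        push_cast; ring

noncomputable def nodeF (m k : ℕ) : ℝ := Real.cos (k * Real.pi / m)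

lemma nodeF_mem (m k : ℕ) : nodeF m k ∈ Set.Icc (-1:ℝ) 1 :=
  ⟨Real.neg_one_le_cos _, Real.cos_le_one _⟩

lemma nodeF_zero (m : ℕ) : nodeF m 0 = 1 := by simp [nodeF]

lemma nodeF_strict {m : ℕ} (hm : 1 ≤ m) : ∀ j k, j < k → k ≤ m → nodeF m k < nodeF m j := by
  intro j k hjk hk
  have hπ : (0:ℝ) < Real.pi := Real.pi_pos
  have hm' : (0:ℝ) < m := by positivity
  have h2 : (k:ℝ) * Real.pi / m ≤ Real.pi := by
    rw [div_le_iff₀ hm']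
    have : (k:ℝ) ≤ m := by exact_mod_cast hk
    nlinarith
  have h3 : (j:ℝ) * Real.pi / m < k * Real.pi / m := by
    have hjk' : (j:ℝ) < k := by exact_mod_cast hjk
    apply div_lt_div_of_pos_right ?_ hm'
    nlinarith
  exact Real.strictAntiOn_cos ⟨by positivity, le_trans (le_of_lt h3) h2⟩ ⟨by positivity, h2⟩ h3

lemma nodeF_inj {m : ℕ} (hm : 1 ≤ m) : Set.InjOn (nodeF m) ↑(Finset.range (m+1)) := by
  intro a ha b hb hab
  simp only [coe_range, Set.mem_Iio] at ha hb
  by_contra hne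
  rcases lt_or_gt_of_ne hne with h | h
  · exact absurd hab (ne_of_gt (nodeF_strict hm a b h (by omega)))
  · exact absurd hab (ne_of_lt (nodeF_strict hm b a h (by omega)))

lemma sign_prod {m : ℕ} (hm : 1 ≤ m) {k : ℕ} (hk : k ≤ m) :
    0 < (-1:ℝ)^k * ∏ j ∈ (Finset.range (m+1)).erase k, (nodeF m k - nodeF m j) := by
  have hsplit : (Finset.range (m+1)).erase k = Finset.range k ∪ Finset.Ico (k+1) (m+1) := by
    ext j; simp only [mem_erase, mem_range, mem_union, mem_Ico]; omega
  have hdisj : Disjoint (Finset.range k) (Finset.Ico (k+1) (m+1)) := by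
    rw [Finset.disjoint_left]; intro j hj hj'
    simp only [mem_range] at hj; simp only [mem_Ico] at hj'; omega
  rw [hsplit, Finset.prod_union hdisj]
  have hA : ∏ j ∈ Finset.range k, (nodeF m k - nodeF m j)
      = (-1:ℝ)^k * ∏ j ∈ Finset.range k, (nodeF m j - nodeF m k) := by
    calc ∏ j ∈ Finset.range k, (nodeF m k - nodeF m j)
        = ∏ j ∈ Finset.range k, ((-1) * (nodeF m j - nodeF m k)) := by
          apply Finset.prod_congr rfl; intro j _; ring
      _ = (-1:ℝ)^k * ∏ j ∈ Finset.range k, (nodeF m j - nodeF m k) := by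
          rw [Finset.prod_mul_distrib, Finset.prod_const, Finset.card_range]
  have hApos : 0 < ∏ j ∈ Finset.range k, (nodeF m j - nodeF m k) := by
    apply Finset.prod_pos; intro j hj
    simp only [mem_range] at hj
    have := nodeF_strict hm j k hj hk; linarith
  have hBpos : 0 < ∏ j ∈ Finset.Ico (k+1) (m+1), (nodeF m k - nodeF m j) := by
    apply Finset.prod_pos; intro j hj
    simp only [mem_Ico] at hj
    have := nodeF_strict hm k j (by omega) (by omega); linarith
  rw [hA]
  have : (-1:ℝ)^k * ((-1:ℝ)^k * (∏ j ∈ Finset.range k, (nodeF m j - nodeF m k)) *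
      ∏ j ∈ Finset.Ico (k+1) (m+1), (nodeF m k - nodeF m j))
      = (∏ j ∈ Finset.range k, (nodeF m j - nodeF m k)) *
      ∏ j ∈ Finset.Ico (k+1) (m+1), (nodeF m k - nodeF m j) := by
    have h1 : (-1:ℝ)^k * (-1:ℝ)^k = 1 := by
      rw [← pow_add]
      exact Even.neg_one_pow ⟨k, rfl⟩
    rw [← mul_assoc, ← mul_assoc, h1, one_mul]
  rw [this]; exact mul_pos hApos hBpos

lemma markov_endpoint {m : ℕ} (hm : 1 ≤ m) (p : ℝ[X]) (hdeg : p.natDegree ≤ m) {B : ℝ}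
    (hB : ∀ x ∈ Set.Icc (-1:ℝ) 1, |p.eval x| ≤ B) :
    |(derivative p).eval 1| ≤ (m:ℝ)^2 * B := by
  classical
  set s : Finset ℕ := Finset.range (m+1) with hs
  set v : ℕ → ℝ := nodeF m with hv
  have hinj : Set.InjOn v ↑s := nodeF_inj hm
  have hcard : s.card = m + 1 := Finset.card_range _
  -- d k : derivative of Lagrange basis at 1
  set d : ℕ → ℝ := fun k => (derivative (Lagrange.basis s v k)).eval 1 with hd
  -- decomposition of basis
  have hbasis : ∀ k ∈ s, Lagrange.basis s v k
      = C (∏ j ∈ s.erase k, (v k - v j)⁻¹) * Lagrange.nodal (s.erase k) v := by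
    intro k _
    rw [Lagrange.basis, Lagrange.nodal_eq]
    rw [show (∏ j ∈ s.erase k, Lagrange.basisDivisor (v k) (v j))
        = ∏ j ∈ s.erase k, (C ((v k - v j)⁻¹) * (X - C (v j))) from rfl]
    rw [Finset.prod_mul_distrib, ← map_prod]
  -- nonnegativity of derivative of nodal at 1
  have hDpos : ∀ k ∈ s, 0 ≤ (derivative (Lagrange.nodal (s.erase k) v)).eval 1 := by
    intro k _
    rw [Lagrange.derivative_nodal, Polynomial.eval_finset_sum]
    apply Finset.sum_nonneg
    intro i _
    rw [Lagrange.eval_nodal]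
    apply Finset.prod_nonneg
    intro j hj
    have := (nodeF_mem m j).2
    simp only [hv]; linarith
  -- sign of d k
  have hsign : ∀ k ∈ s, 0 ≤ (-1:ℝ)^k * d k := by
    intro k hk
    have hk' : k ≤ m := by simp only [hs, mem_range] at hk; omega
    rw [hd]
    simp only [hbasis k hk, derivative_C_mul, eval_mul, eval_C]
    have hc : 0 < (-1:ℝ)^k * ∏ j ∈ s.erase k, (v k - v j)⁻¹ := by
      rw [show (∏ j ∈ s.erase k, (v k - v j)⁻¹) = (∏ j ∈ s.erase k, (v k - v j))⁻¹ by rw [Finset.prod_inv_distrib]]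
      have h := sign_prod hm hk'
      have h1 : ((-1:ℝ)^k)⁻¹ = (-1:ℝ)^k := by
        rw [← inv_pow]; norm_num
      calc (0:ℝ) < ((-1:ℝ)^k * ∏ j ∈ (Finset.range (m+1)).erase k, (v k - v j))⁻¹ := by
              exact inv_pos.mpr h
        _ = (-1:ℝ)^k * (∏ j ∈ s.erase k, (v k - v j))⁻¹ := by
              rw [mul_inv, h1, hs]
    calc (0:ℝ) ≤ ((-1:ℝ)^k * ∏ j ∈ s.erase k, (v k - v j)⁻¹)
          * (derivative (Lagrange.nodal (s.erase k) v)).eval 1 :=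
            mul_nonneg (le_of_lt hc) (hDpos k hk)
      _ = (-1:ℝ)^k * ((∏ j ∈ s.erase k, (v k - v j)⁻¹)
          * (derivative (Lagrange.nodal (s.erase k) v)).eval 1) := by ring
  have habs : ∀ k ∈ s, |d k| = (-1:ℝ)^k * d k := by
    intro k hk
    have h := hsign k hk
    have : |(-1:ℝ)^k * d k| = |d k| := by
      rw [abs_mul, abs_pow, abs_neg, abs_one, one_pow, one_mul]
    rw [← this, abs_of_nonneg h]
  -- sum of signed d k equals m^2 via Chebyshev
  have hTdeg : (Chebyshev.T ℝ (m:ℤ)).degree < s.card := by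
    rw [hcard]
    calc (Chebyshev.T ℝ (m:ℤ)).degree ≤ ((Chebyshev.T ℝ (m:ℤ)).natDegree : WithBot ℕ) :=
          degree_le_natDegree
      _ ≤ (m : WithBot ℕ) := by exact_mod_cast (cheb_pair m).1
      _ < ((m+1 : ℕ) : WithBot ℕ) := by exact_mod_cast lt_add_one m
  have hTval : ∀ k ∈ s, (Chebyshev.T ℝ (m:ℤ)).eval (v k) = (-1:ℝ)^k := by
    intro k hk
    have hm0 : (m:ℝ) ≠ 0 := by positivity
    rw [hv, nodeF, Chebyshev.T_real_cos]
    rw [show ((m:ℤ):ℝ) * ((k:ℝ) * Real.pi / m) = k * Real.pi by push_cast; field_simp]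
    simpa using Real.cos_add_nat_mul_pi 0 k
  have hTsum : Chebyshev.T ℝ (m:ℤ) = ∑ k ∈ s, C ((-1:ℝ)^k) * Lagrange.basis s v k := by
    have := Lagrange.eq_interpolate hinj hTdeg
    rw [this, Lagrange.interpolate_apply]
    apply Finset.sum_congr rfl
    intro k hk
    rw [hTval k hk]
  have hsum : ∑ k ∈ s, (-1:ℝ)^k * d k = (m:ℝ)^2 := by
    have h1 : (derivative (Chebyshev.T ℝ (m:ℤ))).eval 1 = ∑ k ∈ s, (-1:ℝ)^k * d k := by
      rw [hTsum, derivative_sum, Polynomial.eval_finset_sum]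
      apply Finset.sum_congr rfl
      intro k _
      rw [derivative_C_mul, eval_mul, eval_C]
    have h2 : (derivative (Chebyshev.T ℝ (m:ℤ))).eval 1 = (m:ℝ)^2 := by
      rw [Chebyshev.T_derivative_eq_U]
      have : ((m:ℤ) - 1) = ((m - 1 : ℕ) : ℤ) := by omega
      rw [this, eval_mul]
      rw [(cheb_pair (m-1)).2]
      have : ((m - 1 : ℕ) : ℝ) = (m:ℝ) - 1 := by
        have : (1:ℕ) ≤ m := hm
        push_cast [Nat.cast_sub this]; ring
      rw [this]
      simp only [eval_intCast]
      push_cast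
      ring
    rw [← h1, h2]
  -- B nonneg
  have hB0 : 0 ≤ B := le_trans (abs_nonneg _) (hB 1 (by norm_num))
  -- interpolation identity for p
  have hpdeg : p.degree < s.card := by
    rw [hcard]
    calc p.degree ≤ (p.natDegree : WithBot ℕ) := degree_le_natDegree
      _ ≤ (m : WithBot ℕ) := by exact_mod_cast hdeg
      _ < ((m+1 : ℕ) : WithBot ℕ) := by exact_mod_cast lt_add_one m
  have hrep : p = ∑ k ∈ s, C (p.eval (v k)) * Lagrange.basis s v k :=
    calc p = Lagrange.interpolate s v (fun i => p.eval (v i)) := Lagrange.eq_interpolate hinj hpdeg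
      _ = ∑ k ∈ s, C (p.eval (v k)) * Lagrange.basis s v k := Lagrange.interpolate_apply s v _
  have hkey : (derivative p).eval 1 = ∑ k ∈ s, p.eval (v k) * d k := by
    conv_lhs => rw [hrep]
    rw [derivative_sum, Polynomial.eval_finset_sum]
    apply Finset.sum_congr rfl
    intro k _
    rw [derivative_C_mul, eval_mul, eval_C]
  rw [hkey]
  calc |∑ k ∈ s, p.eval (v k) * d k| ≤ ∑ k ∈ s, |p.eval (v k) * d k| :=
        Finset.abs_sum_le_sum_abs _ _
    _ ≤ ∑ k ∈ s, B * ((-1:ℝ)^k * d k) := by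
        apply Finset.sum_le_sum
        intro k hk
        rw [abs_mul, habs k hk]
        exact mul_le_mul_of_nonneg_right (hB (v k) (nodeF_mem m k))
          (by rw [← habs k hk]; exact abs_nonneg _)
    _ = B * ∑ k ∈ s, (-1:ℝ)^k * d k := by rw [Finset.mul_sum]
    _ = (m:ℝ)^2 * B := by rw [hsum]; ring

lemma markov_comp {m : ℕ} (hm : 1 ≤ m) (p : ℝ[X]) (hdeg : p.natDegree ≤ m) (c e : ℝ) {B : ℝ}
    (hB : ∀ x ∈ Set.Icc (-1:ℝ) 1, |p.eval (c*x+e)| ≤ B) :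
    |c| * |(derivative p).eval (c+e)| ≤ (m:ℝ)^2 * B := by
  set q : ℝ[X] := p.comp (C c * X + C e) with hq
  have hqdeg : q.natDegree ≤ m := by
    refine le_trans (natDegree_comp_le) ?_
    have h1 : (C c * X + C e : ℝ[X]).natDegree ≤ 1 := by
      refine le_trans (natDegree_add_le _ _) ?_
      simp only [natDegree_C, max_le_iff]
      constructor
      · exact le_trans natDegree_mul_le (by simp)
      · omega
    calc p.natDegree * (C c * X + C e : ℝ[X]).natDegree ≤ m * 1 :=
          Nat.mul_le_mul hdeg h1
      _ = m := by omega
  have hqeval : ∀ x : ℝ, q.eval x = p.eval (c*x+e) := by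
    intro x; rw [hq, eval_comp]; simp
  have hqder : (derivative q).eval 1 = c * (derivative p).eval (c+e) := by
    rw [hq, derivative_comp]
    have h1 : derivative (C c * X + C e : ℝ[X]) = C c := by
      simp
    rw [h1, eval_mul, eval_C, eval_comp]
    simp
  have := markov_endpoint hm q hqdeg (B := B) (by intro x hx; rw [hqeval]; exact hB x hx)
  rw [hqder, abs_mul] at this
  exact this

lemma markov_point {m : ℕ} (hm : 1 ≤ m) (p : ℝ[X]) (hdeg : p.natDegree ≤ m) {a b : ℝ}
    (hab : a < b) {B : ℝ} (hB : ∀ x ∈ Set.Icc a b, |p.eval x| ≤ B) {x₀ : ℝ}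
    (hx₀ : x₀ ∈ Set.Icc a b) :
    |(derivative p).eval x₀| ≤ 4 * (m:ℝ)^2 / (b - a) * B := by
  have hB0 : 0 ≤ B := le_trans (abs_nonneg _) (hB a ⟨le_refl a, le_of_lt hab⟩)
  obtain ⟨hxa, hxb⟩ := hx₀
  have key : ∀ c e : ℝ, c + e = x₀ → (b-a)/4 ≤ |c| →
      (∀ x ∈ Set.Icc (-1:ℝ) 1, c*x+e ∈ Set.Icc a b) →
      |(derivative p).eval x₀| ≤ 4 * (m:ℝ)^2 / (b - a) * B := by
    intro c e hce hcabs hmap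
    have h := markov_comp hm p hdeg c e (B := B)
      (fun x hx => hB _ (hmap x hx))
    rw [hce] at h
    have hc0 : 0 < |c| := lt_of_lt_of_le (by linarith) hcabs
    rw [← le_div_iff₀' hc0] at h
    calc |(derivative p).eval x₀| ≤ (m:ℝ)^2 * B / |c| := h
      _ ≤ (m:ℝ)^2 * B / ((b-a)/4) := by
          apply div_le_div_of_nonneg_left (by positivity) (by linarith) hcabs
      _ = 4 * (m:ℝ)^2 / (b - a) * B := by
          field_simp
  rcases le_or_gt ((a+b)/2) x₀ with h | h
  · refine key ((x₀ - a)/2) ((x₀ + a)/2) (by ring) ?_ ?_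
    · rw [abs_of_nonneg (by linarith)]; linarith
    · intro x ⟨h1, h2⟩
      constructor <;> nlinarith
  · refine key ((x₀ - b)/2) ((x₀ + b)/2) (by ring) ?_ ?_
    · rw [abs_of_nonpos (by linarith)]; linarith
    · intro x ⟨h1, h2⟩
      constructor <;> nlinarith

lemma poly_mvt {g : ℝ[X]} {a b : ℝ} (hgb : g.eval b = 0) {M : ℝ}
    (hM : ∀ x ∈ Set.Icc a b, |(derivative g).eval x| ≤ M) :
    ∀ x ∈ Set.Icc a b, |g.eval x| ≤ (b - x) * M := by
  intro x hx
  have hconv : Convex ℝ (Set.Icc a b) := convex_Icc a b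
  have hdiff : ∀ y ∈ Set.Icc a b, DifferentiableAt ℝ (fun t => g.eval t) y :=
    fun y _ => g.differentiableAt
  have hderiv : ∀ y ∈ Set.Icc a b, ‖deriv (fun t => g.eval t) y‖ ≤ M := by
    intro y hy
    rw [Polynomial.deriv]
    exact hM y hy
  have hb : b ∈ Set.Icc a b := ⟨le_trans hx.1 hx.2, le_refl b⟩
  have := Convex.norm_image_sub_le_of_norm_deriv_le hdiff hderiv hconv hx hb
  rw [hgb] at this
  simp only [zero_sub, norm_neg, Real.norm_eq_abs] at this
  calc |g.eval x| ≤ M * |b - x| := this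
    _ = (b - x) * M := by rw [abs_of_nonneg (by linarith [hx.2])]; ring

lemma deriv_aeval_line (g : Fin 2 → ℝ[X]) (P : MvPolynomial (Fin 2) ℝ) :
    derivative (MvPolynomial.aeval g P) =
      MvPolynomial.aeval g (MvPolynomial.pderiv 0 P) * derivative (g 0) +
      MvPolynomial.aeval g (MvPolynomial.pderiv 1 P) * derivative (g 1) := by
  induction P using MvPolynomial.induction_on with
  | C a => simp [MvPolynomial.algebraMap_eq]
  | add p q hp hq => simp only [map_add, derivative_add, hp, hq]; ring
  | mul_X p i hp =>
    fin_cases i <;>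
    · simp only [map_mul, MvPolynomial.aeval_X, derivative_mul, hp, MvPolynomial.pderiv_mul,
        MvPolynomial.pderiv_X_self, MvPolynomial.pderiv_X_of_ne, map_add, map_mul, map_one,
        MvPolynomial.aeval_X]
      simp [MvPolynomial.pderiv_X_of_ne, MvPolynomial.pderiv_X_self]
      ring

lemma eval_aeval_line (g : Fin 2 → ℝ[X]) (P : MvPolynomial (Fin 2) ℝ) (t : ℝ) :
    (MvPolynomial.aeval g P).eval t = MvPolynomial.eval (fun i => (g i).eval t) P := by
  induction P using MvPolynomial.induction_on with
  | C a => simp [MvPolynomial.algebraMap_eq]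
  | add p q hp hq => simp [hp, hq]
  | mul_X p i hp => simp [hp]
section
variable {P : MvPolynomial (Fin 2) ℝ} {n : ℕ} {N : ℝ}

lemma le_on_Icc_of_Ioo {f : ℝ → ℝ} (hf : Continuous f) {a b N : ℝ} (hab : a < b)
    (h : ∀ t ∈ Set.Ioo a b, f t ≤ N) : ∀ t ∈ Set.Icc a b, f t ≤ N := by
  intro t ht
  have hclosed : IsClosed {t | f t ≤ N} := isClosed_le hf continuous_const
  rw [show Set.Icc a b = closure (Set.Ioo a b) from (closure_Ioo hab.ne).symm] at ht
  exact hclosed.closure_subset_iff.mpr h ht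

lemma poly_mvt' {g : ℝ[X]} {a b : ℝ} (hga : g.eval a = 0) {M : ℝ}
    (hM : ∀ x ∈ Set.Icc a b, |(derivative g).eval x| ≤ M) :
    ∀ x ∈ Set.Icc a b, |g.eval x| ≤ (x - a) * M := by
  intro x hx
  have hconv : Convex ℝ (Set.Icc a b) := convex_Icc a b
  have hdiff : ∀ y ∈ Set.Icc a b, DifferentiableAt ℝ (fun t => g.eval t) y :=
    fun y _ => g.differentiableAt
  have hderiv : ∀ y ∈ Set.Icc a b, ‖deriv (fun t => g.eval t) y‖ ≤ M := by
    intro y hy; rw [Polynomial.deriv]; exact hM y hy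
  have ha : a ∈ Set.Icc a b := ⟨le_refl a, le_trans hx.1 hx.2⟩
  have := Convex.norm_image_sub_le_of_norm_deriv_le hdiff hderiv hconv ha hx
  rw [hga] at this
  simp only [sub_zero, Real.norm_eq_abs] at this
  calc |g.eval x| ≤ M * |x - a| := this
    _ = (x - a) * M := by rw [abs_of_nonneg (by linarith [hx.1])]; ring

lemma horiz (hn : 1 ≤ n) (hdeg : P.totalDegree ≤ n) (N0 : 0 ≤ N)
    (hN : ∀ u v : ℝ, -1 < u → u < v → v < 1 → |(v - u) * MvPolynomial.eval ![u,v] P| ≤ N)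
    {u v : ℝ} (hu : -1 < u) (huv : u < v) (hv1 : v < 1) (hv0 : 0 ≤ v) :
    |(v - u) * MvPolynomial.eval ![u,v] (MvPolynomial.pderiv 0 P)| ≤ 32 * (n:ℝ)^2 * N := by
  have hn' : (1:ℝ) ≤ n := by exact_mod_cast hn
  set g : Fin 2 → ℝ[X] := ![X, C v] with hg
  set Q : ℝ[X] := MvPolynomial.aeval g P with hQ
  have hg0 : g 0 = X := rfl
  have hg1 : g 1 = C v := rfl
  have hQeval : ∀ t, Q.eval t = MvPolynomial.eval ![t, v] P := by
    intro t; rw [hQ, eval_aeval_line]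
    have he : (fun i => (g i).eval t) = ![t, v] := by funext i; fin_cases i <;> simp [hg]
    rw [he]
  have hQdeg : Q.natDegree ≤ n := by
    have := MvPolynomial.aeval_natDegree_le P hdeg g (n := 1) ?_
    · simpa using this
    · intro i; fin_cases i <;> simp [hg]
  have hQder : derivative Q = MvPolynomial.aeval g (MvPolynomial.pderiv 0 P) := by
    rw [hQ, deriv_aeval_line, hg0, hg1]; simp
  have hQderEval : (derivative Q).eval u = MvPolynomial.eval ![u,v] (MvPolynomial.pderiv 0 P) := by
    rw [hQder, eval_aeval_line]
    have he : (fun i => (g i).eval u) = ![u, v] := by funext i; fin_cases i <;> simp [hg]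
    rw [he]
  set G : ℝ[X] := (C v - X) * Q with hG
  have hGdeg : G.natDegree ≤ n + 1 := by
    refine le_trans natDegree_mul_le ?_
    have h1 : (C v - X : ℝ[X]).natDegree ≤ 1 := by
      refine le_trans (natDegree_sub_le _ _) ?_; simp
    omega
  have hGeval : ∀ t, G.eval t = (v - t) * Q.eval t := by intro t; rw [hG]; simp
  have hGv : G.eval v = 0 := by rw [hGeval]; ring
  have hGIcc : ∀ t ∈ Set.Icc (-1:ℝ) v, |G.eval t| ≤ N := by
    apply le_on_Icc_of_Ioo (by fun_prop) (by linarith)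
    intro t ht
    rw [hGeval, hQeval]
    exact hN t v ht.1 ht.2 hv1
  have hmm : 1 ≤ n + 1 := by omega
  have hderG : ∀ t ∈ Set.Icc (-1:ℝ) v, |(derivative G).eval t| ≤ 4 * ((n+1:ℕ):ℝ)^2 / (v - (-1)) * N :=
    fun t ht => markov_point hmm G hGdeg (show (-1:ℝ) < v by linarith) hGIcc ht
  have hbound : 4 * ((n+1:ℕ):ℝ)^2 / (v - (-1)) * N ≤ 16 * (n:ℝ)^2 * N := by
    have h1 : 4 * ((n+1:ℕ):ℝ)^2 / (v - (-1)) ≤ 4 * ((n+1:ℕ):ℝ)^2 :=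
      div_le_self (by positivity) (by linarith)
    have h2 : 4 * ((n+1:ℕ):ℝ)^2 ≤ 16 * (n:ℝ)^2 := by push_cast; nlinarith
    exact mul_le_mul_of_nonneg_right (le_trans h1 h2) N0
  have hderG' : ∀ t ∈ Set.Icc (-1:ℝ) v, |(derivative G).eval t| ≤ 16 * (n:ℝ)^2 * N :=
    fun t ht => le_trans (hderG t ht) hbound
  have hQu : |Q.eval u| ≤ 16 * (n:ℝ)^2 * N := by
    have hsub : Set.Icc u v ⊆ Set.Icc (-1:ℝ) v := Set.Icc_subset_Icc (by linarith) (le_refl v)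
    have := poly_mvt hGv (fun x hx => hderG' x (hsub hx)) u ⟨le_refl u, le_of_lt huv⟩
    rw [hGeval] at this
    rw [abs_mul, abs_of_nonneg (by linarith : (0:ℝ) ≤ v - u)] at this
    have hvu : 0 < v - u := by linarith
    exact le_of_mul_le_mul_left this hvu
  have hGder : (derivative G).eval u = -Q.eval u + (v - u) * (derivative Q).eval u := by
    rw [hG, derivative_mul]
    simp only [derivative_sub, derivative_C, derivative_X, zero_sub, eval_add, eval_mul,
      eval_neg, eval_one, eval_sub, eval_C, eval_X, neg_mul, one_mul]
    try ring
  have hkey : (v - u) * (derivative Q).eval u = (derivative G).eval u + Q.eval u := by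
    rw [hGder]; ring
  rw [← hQderEval, hkey]
  calc |(derivative G).eval u + Q.eval u| ≤ |(derivative G).eval u| + |Q.eval u| := abs_add_le _ _
    _ ≤ 16 * (n:ℝ)^2 * N + 16 * (n:ℝ)^2 * N :=
        add_le_add (hderG' u ⟨le_of_lt hu, le_of_lt huv⟩) hQu
    _ = 32 * (n:ℝ)^2 * N := by ring
end

lemma vert {P : MvPolynomial (Fin 2) ℝ} {n : ℕ} {N : ℝ} (hn : 1 ≤ n) (hdeg : P.totalDegree ≤ n) (N0 : 0 ≤ N)
    (hN : ∀ u v : ℝ, -1 < u → u < v → v < 1 → |(v - u) * MvPolynomial.eval ![u,v] P| ≤ N)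
    {u v : ℝ} (hu : -1 < u) (huv : u < v) (hv1 : v < 1) (hu0 : u ≤ 0) :
    |(v - u) * MvPolynomial.eval ![u,v] (MvPolynomial.pderiv 1 P)| ≤ 32 * (n:ℝ)^2 * N := by
  have hn' : (1:ℝ) ≤ n := by exact_mod_cast hn
  set g : Fin 2 → ℝ[X] := ![C u, X] with hg
  set Q : ℝ[X] := MvPolynomial.aeval g P with hQ
  have hg0 : g 0 = C u := rfl
  have hg1 : g 1 = X := rfl
  have hQeval : ∀ t, Q.eval t = MvPolynomial.eval ![u, t] P := by
    intro t; rw [hQ, eval_aeval_line]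
    have he : (fun i => (g i).eval t) = ![u, t] := by funext i; fin_cases i <;> simp [hg]
    rw [he]
  have hQdeg : Q.natDegree ≤ n := by
    have := MvPolynomial.aeval_natDegree_le P hdeg g (n := 1) ?_
    · simpa using this
    · intro i; fin_cases i <;> simp [hg]
  have hQder : derivative Q = MvPolynomial.aeval g (MvPolynomial.pderiv 1 P) := by
    rw [hQ, deriv_aeval_line, hg0, hg1]; simp
  have hQderEval : (derivative Q).eval v = MvPolynomial.eval ![u,v] (MvPolynomial.pderiv 1 P) := by
    rw [hQder, eval_aeval_line]
    have he : (fun i => (g i).eval v) = ![u, v] := by funext i; fin_cases i <;> simp [hg]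
    rw [he]
  set G : ℝ[X] := (X - C u) * Q with hG
  have hGdeg : G.natDegree ≤ n + 1 := by
    refine le_trans natDegree_mul_le ?_
    have h1 : (X - C u : ℝ[X]).natDegree ≤ 1 := by
      refine le_trans (natDegree_sub_le _ _) ?_; simp
    omega
  have hGeval : ∀ t, G.eval t = (t - u) * Q.eval t := by intro t; rw [hG]; simp
  have hGu : G.eval u = 0 := by rw [hGeval]; ring
  have hGIcc : ∀ t ∈ Set.Icc u (1:ℝ), |G.eval t| ≤ N := by
    apply le_on_Icc_of_Ioo (by fun_prop) (by linarith)
    intro t ht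
    rw [hGeval, hQeval]
    exact hN u t hu ht.1 ht.2
  have hmm : 1 ≤ n + 1 := by omega
  have hderG : ∀ t ∈ Set.Icc u (1:ℝ), |(derivative G).eval t| ≤ 4 * ((n+1:ℕ):ℝ)^2 / (1 - u) * N :=
    fun t ht => markov_point hmm G hGdeg (show u < (1:ℝ) by linarith) hGIcc ht
  have hbound : 4 * ((n+1:ℕ):ℝ)^2 / (1 - u) * N ≤ 16 * (n:ℝ)^2 * N := by
    have h1 : 4 * ((n+1:ℕ):ℝ)^2 / (1 - u) ≤ 4 * ((n+1:ℕ):ℝ)^2 :=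
      div_le_self (by positivity) (by linarith)
    have h2 : 4 * ((n+1:ℕ):ℝ)^2 ≤ 16 * (n:ℝ)^2 := by push_cast; nlinarith
    exact mul_le_mul_of_nonneg_right (le_trans h1 h2) N0
  have hderG' : ∀ t ∈ Set.Icc u (1:ℝ), |(derivative G).eval t| ≤ 16 * (n:ℝ)^2 * N :=
    fun t ht => le_trans (hderG t ht) hbound
  have hQv : |Q.eval v| ≤ 16 * (n:ℝ)^2 * N := by
    have hsub : Set.Icc u v ⊆ Set.Icc u (1:ℝ) := Set.Icc_subset_Icc (le_refl u) (by linarith)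
    have := poly_mvt' hGu (fun x hx => hderG' x (hsub hx)) v ⟨le_of_lt huv, le_refl v⟩
    rw [hGeval] at this
    rw [abs_mul, abs_of_nonneg (by linarith : (0:ℝ) ≤ v - u)] at this
    have hvu : 0 < v - u := by linarith
    exact le_of_mul_le_mul_left this hvu
  have hGder : (derivative G).eval v = Q.eval v + (v - u) * (derivative Q).eval v := by
    rw [hG, derivative_mul]
    simp only [derivative_sub, derivative_C, derivative_X, sub_zero, eval_add, eval_mul,
      eval_one, eval_sub, eval_C, eval_X, one_mul]
    try ring
  have hkey : (v - u) * (derivative Q).eval v = (derivative G).eval v - Q.eval v := by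
    rw [hGder]; ring
  rw [← hQderEval, hkey]
  calc |(derivative G).eval v - Q.eval v| ≤ |(derivative G).eval v| + |Q.eval v| := abs_sub _ _
    _ ≤ 16 * (n:ℝ)^2 * N + 16 * (n:ℝ)^2 * N :=
        add_le_add (hderG' v ⟨le_of_lt huv, le_of_lt hv1⟩) hQv
    _ = 32 * (n:ℝ)^2 * N := by ring

lemma diag {P : MvPolynomial (Fin 2) ℝ} {n : ℕ} {N : ℝ} (hn : 1 ≤ n) (hdeg : P.totalDegree ≤ n) (N0 : 0 ≤ N)
    (hN : ∀ u v : ℝ, -1 < u → u < v → v < 1 → |(v - u) * MvPolynomial.eval ![u,v] P| ≤ N)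
    {u v : ℝ} (hu : -1 < u) (huv : u < v) (hv1 : v < 1) (hw : v - u ≤ 1) :
    |(v - u) * (MvPolynomial.eval ![u,v] (MvPolynomial.pderiv 0 P)
      + MvPolynomial.eval ![u,v] (MvPolynomial.pderiv 1 P))| ≤ 4 * (n:ℝ)^2 * N := by
  have hn' : (1:ℝ) ≤ n := by exact_mod_cast hn
  have hvu : 0 < v - u := by linarith
  set g : Fin 2 → ℝ[X] := ![C u + X, C v + X] with hg
  set Q : ℝ[X] := MvPolynomial.aeval g P with hQ
  have hg0 : g 0 = C u + X := rfl
  have hg1 : g 1 = C v + X := rfl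
  have hQeval : ∀ t, Q.eval t = MvPolynomial.eval ![u + t, v + t] P := by
    intro t; rw [hQ, eval_aeval_line]
    have he : (fun i => (g i).eval t) = ![u + t, v + t] := by funext i; fin_cases i <;> simp [hg]
    rw [he]
  have hQdeg : Q.natDegree ≤ n := by
    have := MvPolynomial.aeval_natDegree_le P hdeg g (n := 1) ?_
    · simpa using this
    · intro i
      fin_cases i <;>
      · refine le_trans (natDegree_add_le _ _) ?_
        simp [hg]
  have hQder : derivative Q = MvPolynomial.aeval g (MvPolynomial.pderiv 0 P)
      + MvPolynomial.aeval g (MvPolynomial.pderiv 1 P) := by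
    rw [hQ, deriv_aeval_line, hg0, hg1]; simp
  have hQderEval : (derivative Q).eval 0 = MvPolynomial.eval ![u,v] (MvPolynomial.pderiv 0 P)
      + MvPolynomial.eval ![u,v] (MvPolynomial.pderiv 1 P) := by
    rw [hQder, eval_add, eval_aeval_line, eval_aeval_line]
    have he : (fun i => (g i).eval 0) = ![u, v] := by funext i; fin_cases i <;> simp [hg]
    rw [he]
  have hab : (-1 - u : ℝ) < 1 - v := by linarith
  have hQIcc : ∀ t ∈ Set.Icc (-1 - u) (1 - v), |Q.eval t| ≤ N / (v - u) := by
    apply le_on_Icc_of_Ioo (by fun_prop) hab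
    intro t ht
    rw [hQeval]
    rw [le_div_iff₀ hvu]
    have := hN (u + t) (v + t) (by linarith [ht.1]) (by linarith) (by linarith [ht.2])
    rw [show v + t - (u + t) = v - u by ring] at this
    calc |MvPolynomial.eval ![u + t, v + t] P| * (v - u)
        = |(v - u) * MvPolynomial.eval ![u + t, v + t] P| := by
          rw [abs_mul, abs_of_nonneg (le_of_lt hvu)]; ring
      _ ≤ N := this
  have hderQ : |(derivative Q).eval 0| ≤ 4 * (n:ℝ)^2 / (1 - v - (-1 - u)) * (N / (v - u)) :=
    markov_point hn Q hQdeg hab hQIcc ⟨by linarith, by linarith⟩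
  have hN0' : 0 ≤ N / (v - u) := div_nonneg N0 (le_of_lt hvu)
  have hb2 : 4 * (n:ℝ)^2 / (1 - v - (-1 - u)) ≤ 4 * (n:ℝ)^2 := by
    apply div_le_self (by positivity) (by linarith)
  have : |(derivative Q).eval 0| ≤ 4 * (n:ℝ)^2 * (N / (v - u)) :=
    le_trans hderQ (mul_le_mul_of_nonneg_right hb2 hN0')
  rw [← hQderEval, abs_mul, abs_of_nonneg (le_of_lt hvu)]
  calc (v - u) * |(derivative Q).eval 0| ≤ (v - u) * (4 * (n:ℝ)^2 * (N / (v - u))) :=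
        mul_le_mul_of_nonneg_left this (le_of_lt hvu)
    _ = 4 * (n:ℝ)^2 * N := by field_simp

lemma pointwise {P : MvPolynomial (Fin 2) ℝ} {n : ℕ} {N : ℝ} (hn : 1 ≤ n)
    (hdeg : P.totalDegree ≤ n) (N0 : 0 ≤ N)
    (hN : ∀ u v : ℝ, -1 < u → u < v → v < 1 → |(v - u) * MvPolynomial.eval ![u,v] P| ≤ N)
    {u v : ℝ} (hu : -1 < u) (huv : u < v) (hv1 : v < 1) (i : Fin 2) :
    |(v - u) * MvPolynomial.eval ![u,v] (MvPolynomial.pderiv i P)| ≤ 100 * (n:ℝ)^2 * N := by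
  have hnn : (0:ℝ) ≤ (n:ℝ)^2 * N := by positivity
  fin_cases i
  · show |(v - u) * MvPolynomial.eval ![u,v] (MvPolynomial.pderiv 0 P)| ≤ 100 * (n:ℝ)^2 * N
    rcases le_or_gt 0 v with hv0 | hv0
    · have := horiz hn hdeg N0 hN hu huv hv1 hv0
      calc |(v - u) * MvPolynomial.eval ![u,v] (MvPolynomial.pderiv 0 P)| ≤ 32*(n:ℝ)^2*N := this
        _ ≤ 100 * (n:ℝ)^2 * N := by nlinarith
    · have hu0 : u ≤ 0 := by linarith
      have hw : v - u ≤ 1 := by linarith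
      have h1 := vert hn hdeg N0 hN hu huv hv1 hu0
      have h2 := diag hn hdeg N0 hN hu huv hv1 hw
      have hsplit : (v - u) * MvPolynomial.eval ![u,v] (MvPolynomial.pderiv 0 P)
          = (v - u) * (MvPolynomial.eval ![u,v] (MvPolynomial.pderiv 0 P)
            + MvPolynomial.eval ![u,v] (MvPolynomial.pderiv 1 P))
            - (v - u) * MvPolynomial.eval ![u,v] (MvPolynomial.pderiv 1 P) := by ring
      rw [hsplit]
      calc |_ - _| ≤ |(v - u) * (MvPolynomial.eval ![u,v] (MvPolynomial.pderiv 0 P)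
            + MvPolynomial.eval ![u,v] (MvPolynomial.pderiv 1 P))|
            + |(v - u) * MvPolynomial.eval ![u,v] (MvPolynomial.pderiv 1 P)| := abs_sub _ _
        _ ≤ 4*(n:ℝ)^2*N + 32*(n:ℝ)^2*N := add_le_add h2 h1
        _ ≤ 100 * (n:ℝ)^2 * N := by nlinarith
  · show |(v - u) * MvPolynomial.eval ![u,v] (MvPolynomial.pderiv 1 P)| ≤ 100 * (n:ℝ)^2 * N
    rcases le_or_gt u 0 with hu0 | hu0
    · have := vert hn hdeg N0 hN hu huv hv1 hu0
      calc |(v - u) * MvPolynomial.eval ![u,v] (MvPolynomial.pderiv 1 P)| ≤ 32*(n:ℝ)^2*N := this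
        _ ≤ 100 * (n:ℝ)^2 * N := by nlinarith
    · have hv0 : (0:ℝ) ≤ v := by linarith
      have hw : v - u ≤ 1 := by linarith
      have h1 := horiz hn hdeg N0 hN hu huv hv1 hv0
      have h2 := diag hn hdeg N0 hN hu huv hv1 hw
      have hsplit : (v - u) * MvPolynomial.eval ![u,v] (MvPolynomial.pderiv 1 P)
          = (v - u) * (MvPolynomial.eval ![u,v] (MvPolynomial.pderiv 0 P)
            + MvPolynomial.eval ![u,v] (MvPolynomial.pderiv 1 P))
            - (v - u) * MvPolynomial.eval ![u,v] (MvPolynomial.pderiv 0 P) := by ring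
      rw [hsplit]
      calc |_ - _| ≤ |(v - u) * (MvPolynomial.eval ![u,v] (MvPolynomial.pderiv 0 P)
            + MvPolynomial.eval ![u,v] (MvPolynomial.pderiv 1 P))|
            + |(v - u) * MvPolynomial.eval ![u,v] (MvPolynomial.pderiv 0 P)| := abs_sub _ _
        _ ≤ 4*(n:ℝ)^2*N + 32*(n:ℝ)^2*N := add_le_add h2 h1
        _ ≤ 100 * (n:ℝ)^2 * N := by nlinarith

end AuxWeightedMarkov

open MvPolynomial

theorem weighted_sup_markov_on_triangle :
    ∃ C : ℝ, 0 < C ∧ ∀ n : ℕ, 1 ≤ n → ∀ P : MvPolynomial (Fin 2) ℝ,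
      P.totalDegree ≤ n → ∀ i : Fin 2,
        (⨆ p ∈ {p : ℝ × ℝ | -1 < p.1 ∧ p.1 < p.2 ∧ p.2 < 1},
            |(p.2 - p.1) * eval ![p.1, p.2] (pderiv i P)|) ≤
          C * n ^ 2 *
            ⨆ p ∈ {p : ℝ × ℝ | -1 < p.1 ∧ p.1 < p.2 ∧ p.2 < 1},
              |(p.2 - p.1) * eval ![p.1, p.2] P| := by
  refine ⟨100, by norm_num, ?_⟩
  intro n hn P hdeg i
  set S : Set (ℝ × ℝ) := {p : ℝ × ℝ | -1 < p.1 ∧ p.1 < p.2 ∧ p.2 < 1} with hS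
  set N : ℝ := ⨆ p ∈ S, |(p.2 - p.1) * eval ![p.1, p.2] P| with hNdef
  have hN0 : 0 ≤ N := Real.iSup_nonneg fun p => Real.iSup_nonneg fun _ => abs_nonneg _
  have hcont : Continuous (fun p : ℝ × ℝ => |(p.2 - p.1) * eval ![p.1, p.2] P|) := by
    apply Continuous.abs
    apply Continuous.mul (by fun_prop)
    have h : Continuous (fun x : Fin 2 → ℝ => MvPolynomial.eval x P) := by continuity
    apply h.comp
    apply continuous_pi
    intro j
    fin_cases j <;> simp <;> fun_prop
  have hbdd : BddAbove (Set.range fun p : ℝ × ℝ =>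
      ⨆ (_ : p ∈ S), |(p.2 - p.1) * eval ![p.1, p.2] P|) := by
    obtain ⟨M, hM⟩ := (isCompact_Icc (a := ((-1,-1) : ℝ × ℝ)) (b := (1,1))).exists_bound_of_continuousOn
      hcont.continuousOn
    refine ⟨max M 0, ?_⟩
    rintro x ⟨p, rfl⟩
    dsimp only
    by_cases hp : p ∈ S
    · haveI : Nonempty (p ∈ S) := ⟨hp⟩
      rw [ciSup_const]
      have hpK : p ∈ Set.Icc ((-1,-1) : ℝ × ℝ) (1,1) := by
        obtain ⟨h1, h2, h3⟩ := hp
        simp only [Set.mem_Icc, Prod.le_def]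
        exact ⟨⟨le_of_lt h1, by linarith⟩, ⟨by linarith, le_of_lt h3⟩⟩
      have := hM p hpK
      rw [Real.norm_eq_abs, abs_abs] at this
      exact le_trans this (le_max_left _ _)
    · haveI : IsEmpty (p ∈ S) := ⟨hp⟩
      rw [Real.iSup_of_isEmpty]
      exact le_max_right _ _
  have hNle : ∀ u v : ℝ, -1 < u → u < v → v < 1 → |(v - u) * eval ![u, v] P| ≤ N := by
    intro u v h1 h2 h3
    have hp : ((u, v) : ℝ × ℝ) ∈ S := ⟨h1, h2, h3⟩
    haveI : Nonempty (((u, v) : ℝ × ℝ) ∈ S) := ⟨hp⟩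
    have h := le_ciSup hbdd ((u, v) : ℝ × ℝ)
    rw [ciSup_const] at h
    exact h
  have hgoal : 0 ≤ 100 * (n:ℝ)^2 * N := by positivity
  refine Real.iSup_le (fun p => Real.iSup_le (fun hp => ?_) hgoal) hgoal
  obtain ⟨h1, h2, h3⟩ := hp
  exact pointwise hn hdeg hN0 hNle h1 h2 h3 i
end
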